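/- Fix types α (tensor elements) and V (rule variables), natural numbers n, m, p, h with h ≤ p, index transformers e : Fin n → Fin h → (V → ℤ) → ℤ, condition predicates g : Fin m → Fin p → (V → ℤ) → Prop, a scalar function scalarf : (Fin n → α) → (Fin m → Prop) → Prop, and a restriction-monotone family of precondition predicates Pre : ∀ i : ℕ, ((Fin p → Fin i → V → ℤ) → Prop). For a rank i, define valid i := ∀ (X : (Fin h → Fin i → ℤ) → α) (v : Fin p → Fin i → (V → ℤ)), Pre i v → scalarf (fun r => X (fun t j => e r t (v (Fin.castLE h_le_p t) j))) (fun l => ∀ (t : Fin p) (j : Fin i), g l t (v t j)), where Fin.castLE h_le_p : Fin h → Fin p is the canonical embedding given by h ≤ p, so that the first h of the p aggregated axes are the axes indexing the tensor X. Then for every k with max (m + n.choose 2) 1 ≤ k, valid k implies valid (k + 1). -/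
import Mathlib


/-- Validity at rank `i` of a rewrite rule with `p` aggregated-axes in the same rank
class, the first `h` of which index the single input tensor `X` (via the canonical
embedding `Fin.castLE`), with `n` accesses to `X` and `m` conditions. -/
def Valid {α V : Type*} (n m p h : ℕ) (hhp : h ≤ p)
    (e : Fin n → Fin h → (V → ℤ) → ℤ)
    (g : Fin m → Fin p → (V → ℤ) → Prop)
    (scalarf : (Fin n → α) → (Fin m → Prop) → Prop)
    (Pre : ∀ i : ℕ, (Fin p → Fin i → V → ℤ) → Prop)
    (i : ℕ) : Prop :=
  ∀ (X : (Fin h → Fin i → ℤ) → α) (v : Fin p → Fin i → V → ℤ), Pre i v →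
    scalarf (fun r => X (fun t j => e r t (v (Fin.castLE hhp t) j)))
      (fun l => ∀ (t : Fin p) (j : Fin i), g l t (v t j))

/-- Sufficient-rank lemma for rules where an arbitrary number `p` of aggregated-axes
share the same rank class: if the precondition family is restriction-monotone (all
aggregated-axes of the class projected simultaneously), then for every
`k ≥ max (m + C(n,2)) 1`, validity at rank `k` implies validity at rank `k+1`. -/
theorem sufficient_rank_many_axes {α V : Type*} (n m p h : ℕ) (hhp : h ≤ p)
    (e : Fin n → Fin h → (V → ℤ) → ℤ)
    (g : Fin m → Fin p → (V → ℤ) → Prop)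
    (scalarf : (Fin n → α) → (Fin m → Prop) → Prop)
    (Pre : ∀ i : ℕ, (Fin p → Fin i → V → ℤ) → Prop)
    (hPre : ∀ (k i : ℕ), k ≤ i → ∀ ρ : Fin k → Fin i, Function.Injective ρ →
      ∀ v : Fin p → Fin i → V → ℤ, Pre i v → Pre k (fun t j => v t (ρ j)))
    (k : ℕ) (hk : max (m + n.choose 2) 1 ≤ k) :
    Valid n m p h hhp e g scalarf Pre k → Valid n m p h hhp e g scalarf Pre (k + 1) := by
  classical
  intro hvalid X v hpre
  have hk1 : m + n.choose 2 ≤ k := le_trans (le_max_left _ _) hk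
  -- the access functions at rank k+1
  set A : Fin n → Fin h → Fin (k + 1) → ℤ :=
    fun r t j => e r t (v (Fin.castLE hhp t) j) with hA
  -- witness columns for failing conditions
  set wl : Fin m → Fin (k + 1) := fun l =>
    if hl : ∃ j, ∃ t, ¬ g l t (v t j) then hl.choose else 0 with hwl
  -- columns at which two accesses differ
  set D : Fin n → Fin n → Finset (Fin (k + 1)) := fun r r' =>
    Finset.univ.filter fun j => ∃ t, A r t j ≠ A r' t j with hD
  have hDsymm : ∀ r r', D r r' = D r' r := by
    intro r r'
    simp only [hD]
    apply Finset.filter_congr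
    intro j _
    constructor <;> rintro ⟨t, ht⟩ <;> exact ⟨t, ht.symm⟩
  set wp : Fin n → Fin n → Fin (k + 1) := fun r r' =>
    if hne : (D r r').Nonempty then (D r r').min' hne else 0 with hwp
  have hwpsymm : ∀ r r', wp r r' = wp r' r := by
    intro r r'
    simp only [hwp, hDsymm r r']
  -- witness for a differing pair of accesses
  have hwpmem : ∀ r r', A r ≠ A r' → ∃ t, A r t (wp r r') ≠ A r' t (wp r r') := by
    intro r r' hne
    have hNE : (D r r').Nonempty := by
      rcases Function.ne_iff.mp hne with ⟨t, ht⟩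
      rcases Function.ne_iff.mp ht with ⟨j, hj⟩
      exact ⟨j, by simp only [hD, Finset.mem_filter, Finset.mem_univ, true_and]; exact ⟨t, hj⟩⟩
    have := (D r r').min'_mem hNE
    simp only [hD, Finset.mem_filter, Finset.mem_univ, true_and] at this
    simpa only [hwp, dif_pos hNE] using this
  set W : Sym2 (Fin n) → Fin (k + 1) := Sym2.lift ⟨wp, fun r r' => hwpsymm r r'⟩ with hW
  set B : Finset (Fin (k + 1)) :=
    (Finset.univ.image wl) ∪
      ((Finset.univ : Finset {s : Sym2 (Fin n) // ¬ s.IsDiag}).image fun s => W s.1) with hB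
  have hBcard : B.card < k + 1 := by
    have h1 : (Finset.univ.image wl).card ≤ m := by
      simpa using (Finset.card_image_le (s := (Finset.univ : Finset (Fin m))) (f := wl))
    have h2 : ((Finset.univ : Finset {s : Sym2 (Fin n) // ¬ s.IsDiag}).image
        fun s => W s.1).card ≤ n.choose 2 := by
      refine le_trans (Finset.card_image_le) ?_
      have hc := Sym2.card_subtype_not_diag (α := Fin n)
      simp only [Fintype.card_fin] at hc
      simp [Finset.card_univ, hc]
    calc B.card ≤ _ + _ := Finset.card_union_le _ _
      _ ≤ m + n.choose 2 := Nat.add_le_add h1 h2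
      _ < k + 1 := Nat.lt_succ_of_le hk1
  -- a good column to drop
  obtain ⟨j₀, hj₀⟩ : ∃ j₀ : Fin (k + 1), j₀ ∉ B := by
    by_contra hcon
    push_neg at hcon
    have : (Finset.univ : Finset (Fin (k + 1))).card ≤ B.card :=
      Finset.card_le_card fun x _ => hcon x
    simp only [Finset.card_univ, Fintype.card_fin] at this
    omega
  set ρ : Fin k → Fin (k + 1) := j₀.succAbove with hρ
  have hρinj : Function.Injective ρ := Fin.succAbove_right_injective
  -- conditions are reflected
  have hcondkey : ∀ l : Fin m, (∀ (t : Fin p) (j : Fin k), g l t (v t (ρ j))) ↔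
      (∀ (t : Fin p) (j : Fin (k + 1)), g l t (v t j)) := by
    intro l
    constructor
    · intro hres
      by_contra hfull
      push_neg at hfull
      obtain ⟨t, j, hj⟩ := hfull
      have hex : ∃ j, ∃ t, ¬ g l t (v t j) := ⟨j, t, hj⟩
      obtain ⟨t', ht'⟩ := hex.choose_spec
      have hwlval : wl l = hex.choose := by simp only [hwl, dif_pos hex]
      have hmem : wl l ∈ B := by
        simp only [hB, Finset.mem_union]
        exact Or.inl (Finset.mem_image_of_mem _ (Finset.mem_univ l))
      have hne : wl l ≠ j₀ := fun hh => hj₀ (hh ▸ hmem)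
      obtain ⟨j', hj'⟩ := Fin.exists_succAbove_eq hne
      exact ht' (hwlval ▸ hj' ▸ hres t' j')
    · intro hfull t j; exact hfull t (ρ j)
  -- accesses are determined by their restriction
  have hacckey : ∀ r r' : Fin n,
      (fun t j => A r t (ρ j)) = (fun t (j : Fin k) => A r' t (ρ j)) → A r = A r' := by
    intro r r' hres
    by_contra hne
    obtain ⟨t, ht⟩ := hwpmem r r' hne
    by_cases hd : r = r'
    · exact ht (by rw [hd])
    have hmem : wp r r' ∈ B := by
      simp only [hB, Finset.mem_union]
      refine Or.inr (Finset.mem_image.mpr ⟨⟨s(r, r'), ?_⟩, Finset.mem_univ _, ?_⟩)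
      · simpa [Sym2.mk_isDiag_iff] using hd
      · simp [hW, Sym2.lift_mk]
    have hnej : wp r r' ≠ j₀ := fun hh => hj₀ (hh ▸ hmem)
    obtain ⟨j', hj'⟩ := Fin.exists_succAbove_eq hnej
    apply ht
    rw [← hj']
    exact congrFun (congrFun hres t) j'
  -- the rank-k instance
  set X' : (Fin h → Fin k → ℤ) → α := fun Y =>
    if hY : ∃ r, (fun t j => A r t (ρ j)) = Y then X (A hY.choose)
    else X (fun _ _ => 0) with hX'
  have hX'eq : ∀ r : Fin n, X' (fun t j => A r t (ρ j)) = X (A r) := by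
    intro r
    have hY : ∃ r', (fun t j => A r' t (ρ j)) = (fun t j => A r t (ρ j)) := ⟨r, rfl⟩
    have := hacckey hY.choose r hY.choose_spec
    simp only [hX', dif_pos hY, this]
  have hpre' : Pre k (fun t j => v t (ρ j)) :=
    hPre k (k + 1) (Nat.le_succ k) ρ hρinj v hpre
  have hmain := hvalid X' (fun t j => v t (ρ j)) hpre'
  have hacc : (fun r => X' (fun t j => e r t (v (Fin.castLE hhp t) (ρ j)))) =
      (fun r => X (fun t j => e r t (v (Fin.castLE hhp t) j))) := by
    funext r
    exact hX'eq r
  have hcond : (fun l => ∀ (t : Fin p) (j : Fin k), g l t (v t (ρ j))) =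
      (fun l => ∀ (t : Fin p) (j : Fin (k + 1)), g l t (v t j)) := by
    funext l
    exact propext (hcondkey l)
  rw [hacc, hcond] at hmain
  exact hmain
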